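/- Let X be a one-sided shift space over a finite alphabet 𝔞 and let 0 ≤ k ≤ l. Then the diagram of group homomorphisms commutes: A_k^{l+1} ∘ I_k^l = I_{k+1}^{l+1} ∘ A_k^l as maps from ℤ^{M_k^l} to ℤ^{M_{k+1}^{l+2}}. -/
import Mathlib


open scoped Classical

/-- The one-sided shift map on `ℕ → A`. -/
def shiftMap {A : Type*} (x : ℕ → A) : ℕ → A := fun i => x (i + 1)

/-- The point `ux` obtained by prepending the word `u` to `x`. -/
def prepend {A : Type*} (u : List A) (x : ℕ → A) : ℕ → A :=
  fun i => if h : i < u.length then u.get ⟨i, h⟩ else x (i - u.length)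

/-- `P_l(x) = {u ∈ 𝔞_l : ux ∈ X}`, the past of order `l` of `x ∈ X`. -/
def pastSet {A : Type*} (X : Set (ℕ → A)) (l : ℕ) (x : ℕ → A) : Set (List A) :=
  {u | u.length ≤ l ∧ prepend u x ∈ X}

/-- The `l`-past equivalence class `[x]_l = {y ∈ X : P_l(y) = P_l(x)}`. -/
def pastClass {A : Type*} (X : Set (ℕ → A)) (l : ℕ) (x : ℕ → A) : Set (ℕ → A) :=
  {y | y ∈ X ∧ pastSet X l y = pastSet X l x}

/-- The (finite) collection `{E_1^l, …, E_{m(l)}^l}` of `l`-past equivalence classes. -/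
def classes {A : Type*} (X : Set (ℕ → A)) (l : ℕ) : Set (Set (ℕ → A)) :=
  {E | ∃ x ∈ X, E = pastClass X l x}

/-- `uE = {ux : x ∈ E} ∩ X` for a word `u` and a set `E ⊆ X`. -/
def wordMulSet {A : Type*} (X : Set (ℕ → A)) (u : List A) (E : Set (ℕ → A)) :
    Set (ℕ → A) :=
  {z | z ∈ X ∧ ∃ x ∈ E, z = prepend u x}

/-- `M_k^l`: the collection of `l`-past equivalence classes `E` with `P_k(E) ≠ ∅`. -/
def Mcl {A : Type*} (X : Set (ℕ → A)) (k l : ℕ) : Set (Set (ℕ → A)) :=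
  {E | E ∈ classes X l ∧ ∃ x ∈ E, (pastSet X k x).Nonempty}

/-- The matrix entry `I_l(i,j)`: `1` if `E_i^{l+1} ⊆ E_j^l` and `0` otherwise. -/
noncomputable def Imat {A : Type*} (E F : Set (ℕ → A)) : ℤ :=
  if E ⊆ F then 1 else 0

/-- The matrix entry `A_l(i,j,a)`: `1` if `∅ ≠ aE_i^{l+1} ⊆ E_j^l` and `0` otherwise. -/
noncomputable def Amat {A : Type*} (X : Set (ℕ → A)) (a : A)
    (E F : Set (ℕ → A)) : ℤ :=
  if (wordMulSet X [a] E).Nonempty ∧ wordMulSet X [a] E ⊆ F then 1 else 0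

lemma classes_finite {A : Type*} [Finite A] (X : Set (ℕ → A)) (l : ℕ) :
    (classes X l).Finite := by
  have h1 : {u : List A | u.length ≤ l}.Finite := List.finite_length_le A l
  have h2 : {P : Set (List A) | P ⊆ {u | u.length ≤ l}}.Finite :=
    h1.finite_subsets
  refine Set.Finite.subset
    (h2.image (fun P => {y | y ∈ X ∧ pastSet X l y = P})) ?_
  rintro E ⟨x, hx, rfl⟩
  exact ⟨pastSet X l x, fun u hu => hu.1, rfl⟩

instance McFinite {A : Type*} [Finite A] (X : Set (ℕ → A)) (k l : ℕ) :
    Finite ↥(Mcl X k l) :=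
  ((classes_finite X l).subset (fun _ hE => hE.1)).to_subtype

/-- The group homomorphism between free abelian groups determined by the
matrix `T`: the basis vector `e_j` is sent to `∑_i T i j • e_i`. -/
noncomputable def matHom {ι κ : Type*} [Finite κ] (T : κ → ι → ℤ) :
    (ι →₀ ℤ) →+ (κ →₀ ℤ) :=
  Finsupp.liftAddHom fun j =>
    zmultiplesHom _ (Finsupp.equivFunOnFinite.symm fun i => T i j)

/-- The homomorphism `I_k^l : ℤ^{M_k^l} → ℤ^{M_k^{l+1}}`,
`e_j ↦ ∑_{i ∈ M_k^{l+1}} I_l(i,j) e_i`. -/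
noncomputable def Ihom {A : Type*} [Finite A] (X : Set (ℕ → A)) (k l : ℕ) :
    (↥(Mcl X k l) →₀ ℤ) →+ (↥(Mcl X k (l + 1)) →₀ ℤ) :=
  matHom fun i j => Imat (i : Set (ℕ → A)) (j : Set (ℕ → A))

/-- The homomorphism `A_k^l : ℤ^{M_k^l} → ℤ^{M_{k+1}^{l+1}}`,
`e_j ↦ ∑_{i ∈ M_{k+1}^{l+1}} ∑_{a ∈ 𝔞} A_l(i,j,a) e_i`. -/
noncomputable def Ahom {A : Type*} [Fintype A] (X : Set (ℕ → A)) (k l : ℕ) :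
    (↥(Mcl X k l) →₀ ℤ) →+ (↥(Mcl X (k + 1) (l + 1)) →₀ ℤ) :=
  matHom fun i j => ∑ a : A, Amat X a (i : Set (ℕ → A)) (j : Set (ℕ → A))

lemma prepend_nil {A : Type*} (x : ℕ → A) : prepend ([] : List A) x = x := by
  funext i; simp [prepend]

lemma prepend_append {A : Type*} (u v : List A) (x : ℕ → A) :
    prepend (u ++ v) x = prepend u (prepend v x) := by
  funext i
  simp only [prepend, List.get_eq_getElem, List.length_append]
  rcases lt_or_ge i u.length with h | h
  · rw [dif_pos (by omega), dif_pos h, List.getElem_append_left h]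
  · rcases lt_or_ge i (u.length + v.length) with h2 | h2
    · rw [dif_pos h2, dif_neg (by omega), dif_pos (by omega),
        List.getElem_append_right h]
    · rw [dif_neg (by omega), dif_neg (by omega), dif_neg (by omega), Nat.sub_sub]

lemma nil_mem_pastSet {A : Type*} {X : Set (ℕ → A)} {k : ℕ} {x : ℕ → A} (hx : x ∈ X) :
    ([] : List A) ∈ pastSet X k x := ⟨by simp, by rwa [prepend_nil]⟩

lemma pastSet_anti {A : Type*} (X : Set (ℕ → A)) {k m : ℕ} (hkm : k ≤ m) {x y : ℕ → A}
    (h : pastSet X m x = pastSet X m y) : pastSet X k x = pastSet X k y := by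
  ext u
  simp only [pastSet, Set.mem_setOf_eq]
  constructor
  · rintro ⟨h1, h2⟩
    have hm : u ∈ pastSet X m y := h ▸ (⟨h1.trans hkm, h2⟩ : u ∈ pastSet X m x)
    exact ⟨h1, hm.2⟩
  · rintro ⟨h1, h2⟩
    have hm : u ∈ pastSet X m x := h.symm ▸ (⟨h1.trans hkm, h2⟩ : u ∈ pastSet X m y)
    exact ⟨h1, hm.2⟩

lemma mem_pastSet_prepend {A : Type*} {X : Set (ℕ → A)} {m : ℕ} {a : A} {x : ℕ → A}
    {u : List A} :
    u ∈ pastSet X m (prepend [a] x) ↔ u.length ≤ m ∧ u ++ [a] ∈ pastSet X (m + 1) x := by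
  simp only [pastSet, Set.mem_setOf_eq, ← prepend_append, List.length_append,
    List.length_singleton]
  constructor
  · rintro ⟨h1, h2⟩; exact ⟨h1, by omega, h2⟩
  · rintro ⟨h1, _, h2⟩; exact ⟨h1, h2⟩

lemma pastSet_prepend_eq {A : Type*} {X : Set (ℕ → A)} {m : ℕ} (a : A) {x y : ℕ → A}
    (h : pastSet X (m + 1) x = pastSet X (m + 1) y) :
    pastSet X m (prepend [a] x) = pastSet X m (prepend [a] y) := by
  ext u; rw [mem_pastSet_prepend, mem_pastSet_prepend, h]

lemma mem_pastClass_self {A : Type*} {X : Set (ℕ → A)} {l : ℕ} {x : ℕ → A} (hx : x ∈ X) :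
    x ∈ pastClass X l x := ⟨hx, rfl⟩

lemma pastClass_eq_of_mem {A : Type*} {X : Set (ℕ → A)} {l : ℕ} {x z : ℕ → A}
    (hz : z ∈ pastClass X l x) : pastClass X l z = pastClass X l x := by
  ext y; simp only [pastClass, Set.mem_setOf_eq]
  rw [hz.2]

lemma Mcl_eq_classes {A : Type*} (X : Set (ℕ → A)) (k l : ℕ) :
    Mcl X k l = classes X l := by
  ext E
  refine ⟨fun h => h.1, fun h => ⟨h, ?_⟩⟩
  obtain ⟨x, hx, rfl⟩ := h
  exact ⟨x, mem_pastClass_self hx, ⟨[], nil_mem_pastSet hx⟩⟩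

lemma matHom_single {ι κ : Type*} [Finite κ] (T : κ → ι → ℤ) (j : ι) (p : κ) :
    matHom T (Finsupp.single j 1) p = T p j := by
  simp [matHom, Finsupp.liftAddHom_apply_single]

lemma matHom_apply {ι κ : Type*} [Fintype ι] [Finite κ] (T : κ → ι → ℤ)
    (f : ι →₀ ℤ) (p : κ) : matHom T f p = ∑ j, T p j * f j := by
  rw [matHom, Finsupp.liftAddHom_apply, Finsupp.sum_apply, Finsupp.sum_fintype]
  · simp [mul_comm]
  · intro i; simp

lemma key_sum_eq {A : Type*} [Fintype A] (X : Set (ℕ → A)) (k l : ℕ) (a : A)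
    (p : ↥(Mcl X (k + 1) (l + 1 + 1))) (j : ↥(Mcl X k l)) :
    letI : Fintype ↥(Mcl X (k + 1) (l + 1)) := Fintype.ofFinite _
    ∑ i : ↥(Mcl X (k + 1) (l + 1)),
        Amat X a (p : Set (ℕ → A)) (i : Set (ℕ → A)) * Imat (i : Set (ℕ → A)) (j : Set (ℕ → A)) =
      ∑ i : ↥(Mcl X (k + 1) (l + 1)),
        Imat (p : Set (ℕ → A)) (i : Set (ℕ → A)) * Amat X a (i : Set (ℕ → A)) (j : Set (ℕ → A)) := by
  letI : Fintype ↥(Mcl X (k + 1) (l + 1)) := Fintype.ofFinite _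
  obtain ⟨x, hxX, hp⟩ := p.2.1
  obtain ⟨w, hwX, hj⟩ := j.2.1
  by_cases hax : prepend [a] x ∈ X
  · -- both sums equal `if prepend [a] x ∈ ↑j then 1 else 0`
    have hcls0 : pastClass X (l + 1) (prepend [a] x) ∈ Mcl X (k + 1) (l + 1) := by
      rw [Mcl_eq_classes]; exact ⟨_, hax, rfl⟩
    have hcls1 : pastClass X (l + 1) x ∈ Mcl X (k + 1) (l + 1) := by
      rw [Mcl_eq_classes]; exact ⟨_, hxX, rfl⟩
    set i₀ : ↥(Mcl X (k + 1) (l + 1)) := ⟨_, hcls0⟩ with hi₀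
    set i₁ : ↥(Mcl X (k + 1) (l + 1)) := ⟨_, hcls1⟩ with hi₁
    have haxp : prepend [a] x ∈ wordMulSet X [a] (p : Set (ℕ → A)) :=
      ⟨hax, x, hp ▸ mem_pastClass_self hxX, rfl⟩
    have hi0j : (i₀ : Set (ℕ → A)) ⊆ (j : Set (ℕ → A)) ↔ prepend [a] x ∈ (j : Set (ℕ → A)) := by
      constructor
      · intro hsub; exact hsub (mem_pastClass_self hax)
      · intro hmem z hz
        rw [hj] at hmem ⊢
        exact ⟨hz.1, (pastSet_anti X (Nat.le_succ l) hz.2).trans hmem.2⟩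
    rw [Finset.sum_eq_single i₀, Finset.sum_eq_single i₁]
    · -- main terms
      have hA0 : Amat X a (p : Set (ℕ → A)) (i₀ : Set (ℕ → A)) = 1 := by
        rw [Amat, if_pos]
        refine ⟨⟨_, haxp⟩, ?_⟩
        rintro z ⟨hzX, y, hyp, rfl⟩
        rw [hp] at hyp
        exact ⟨hzX, pastSet_prepend_eq a hyp.2⟩
      have hI1 : Imat (p : Set (ℕ → A)) (i₁ : Set (ℕ → A)) = 1 := by
        rw [Imat, if_pos]
        intro y hy
        rw [hp] at hy
        exact ⟨hy.1, pastSet_anti X (Nat.le_succ (l + 1)) hy.2⟩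
      have hA1 : Amat X a (i₁ : Set (ℕ → A)) (j : Set (ℕ → A)) =
          if prepend [a] x ∈ (j : Set (ℕ → A)) then 1 else 0 := by
        rw [Amat]
        refine if_congr ?_ rfl rfl
        constructor
        · rintro ⟨-, hsub⟩
          exact hsub ⟨hax, x, mem_pastClass_self hxX, rfl⟩
        · intro hmem
          refine ⟨⟨_, hax, x, mem_pastClass_self hxX, rfl⟩, ?_⟩
          rintro z ⟨hzX, y, hyi, rfl⟩
          rw [hj] at hmem ⊢
          exact ⟨hzX, (pastSet_prepend_eq a hyi.2).trans hmem.2⟩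
      rw [hA0, hI1, one_mul, one_mul, hA1, Imat]
      exact if_congr hi0j rfl rfl
    · -- off-diagonal terms, RHS
      intro b _ hb
      rw [Imat, if_neg, zero_mul]
      intro hsub
      obtain ⟨wb, hwbX, hb'⟩ := b.2.1
      have hxb : x ∈ (b : Set (ℕ → A)) := hsub (hp ▸ mem_pastClass_self hxX)
      rw [hb'] at hxb
      refine hb (Subtype.ext ?_)
      rw [hb', ← pastClass_eq_of_mem hxb]
    · intro h; exact absurd (Finset.mem_univ i₁) h
    · -- off-diagonal terms, LHS
      intro b _ hb
      rw [Amat, if_neg, zero_mul]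
      rintro ⟨-, hsub⟩
      obtain ⟨wb, hwbX, hb'⟩ := b.2.1
      have haxb : prepend [a] x ∈ (b : Set (ℕ → A)) := hsub haxp
      rw [hb'] at haxb
      refine hb (Subtype.ext ?_)
      rw [hb', ← pastClass_eq_of_mem haxb]
    · intro h; exact absurd (Finset.mem_univ i₀) h
  · -- `prepend [a] x ∉ X`: every term vanishes on both sides
    rw [Finset.sum_eq_zero, Finset.sum_eq_zero]
    · intro b _
      rw [Imat]
      by_cases hsub : (p : Set (ℕ → A)) ⊆ (b : Set (ℕ → A))
      · rw [if_pos hsub, one_mul, Amat, if_neg]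
        rintro ⟨⟨z, hzX, y, hyb, rfl⟩, -⟩
        obtain ⟨wb, hwbX, hb'⟩ := b.2.1
        have hxb : x ∈ pastClass X (l + 1) wb := hb' ▸ hsub (hp ▸ mem_pastClass_self hxX)
        have hyb' : y ∈ pastClass X (l + 1) wb := hb' ▸ hyb
        have h1 : [a] ∈ pastSet X (l + 1) y := ⟨by simp, hzX⟩
        have h2 : [a] ∈ pastSet X (l + 1) x := by
          rw [pastSet_anti X le_rfl (hxb.2.trans hyb'.2.symm)]; exact h1
        exact hax h2.2
      · rw [if_neg hsub, zero_mul]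
    · intro b _
      rw [Amat, if_neg, zero_mul]
      rintro ⟨⟨z, hzX, y, hyp, rfl⟩, -⟩
      rw [hp] at hyp
      have h1 : [a] ∈ pastSet X (l + 1 + 1) y := ⟨by simp, hzX⟩
      rw [hyp.2] at h1
      exact hax h1.2

/-- for `0 ≤ k ≤ l` the diagram commutes:
`A_k^{l+1} ∘ I_k^l = I_{k+1}^{l+1} ∘ A_k^l` as maps `ℤ^{M_k^l} → ℤ^{M_{k+1}^{l+2}}`. -/
theorem Ahom_comp_Ihom_eq_Ihom_comp_Ahom {A : Type*} [Fintype A] [Nonempty A]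
    [TopologicalSpace A] [DiscreteTopology A]
    (X : Set (ℕ → A)) (hXclosed : IsClosed X) (hXinv : ∀ x ∈ X, shiftMap x ∈ X)
    (k l : ℕ) (hkl : k ≤ l) :
    (Ahom X k (l + 1)).comp (Ihom X k l) =
      (Ihom X (k + 1) (l + 1)).comp (Ahom X k l) := by
  letI : Fintype ↥(Mcl X k l) := Fintype.ofFinite _
  letI : Fintype ↥(Mcl X k (l + 1)) := Fintype.ofFinite _
  letI : Fintype ↥(Mcl X (k + 1) (l + 1)) := Fintype.ofFinite _
  refine Finsupp.addHom_ext fun j n => ?_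
  have hn : (Finsupp.single j n : ↥(Mcl X k l) →₀ ℤ) = n • Finsupp.single j 1 := by
    rw [Finsupp.smul_single, smul_eq_mul, mul_one]
  rw [AddMonoidHom.comp_apply, AddMonoidHom.comp_apply, hn, map_zsmul, map_zsmul,
    map_zsmul, map_zsmul]
  congr 1
  ext q
  simp only [Ahom, Ihom]
  rw [matHom_apply, matHom_apply]
  simp only [matHom_single]
  have hM : Mcl X k (l + 1) = Mcl X (k + 1) (l + 1) := by
    rw [Mcl_eq_classes, Mcl_eq_classes]
  rw [Fintype.sum_equiv (Equiv.setCongr hM)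
    (fun i : ↥(Mcl X k (l + 1)) =>
      (∑ a : A, Amat X a (q : Set (ℕ → A)) (i : Set (ℕ → A))) * Imat (i : Set (ℕ → A)) (j : Set (ℕ → A)))
    (fun i : ↥(Mcl X (k + 1) (l + 1)) =>
      (∑ a : A, Amat X a (q : Set (ℕ → A)) (i : Set (ℕ → A))) * Imat (i : Set (ℕ → A)) (j : Set (ℕ → A)))
    (fun i => rfl)]
  simp only [Finset.sum_mul, Finset.mul_sum]
  rw [Finset.sum_comm]
  conv_rhs => rw [Finset.sum_comm]
  refine Finset.sum_congr rfl fun a _ => ?_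
  exact key_sum_eq X k l a q j
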